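/- Let A, Â ∈ ℝ^{n×n} be symmetric matrices with 0 ⪯ Â ⪯ A, and set P̂ := Â + I and M̂ := P̂^{-1/2}(A+I)P̂^{-1/2}. Then ‖log(M̂)‖_F² ≤ ( trace(log(A+I)) − trace(log(P̂)) ) · log(1 + ‖A − Â‖₂). -/

import Mathlib

open MeasureTheory ProbabilityTheory Matrix

/-- Matrix logarithm of a real symmetric matrix, obtained by applying the real logarithm
to the eigenvalues in a spectral decomposition. -/
noncomputable def matLog {n : ℕ} (B : Matrix (Fin n) (Fin n) ℝ) : Matrix (Fin n) (Fin n) ℝ :=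
  if hB : B.IsHermitian then
    (hB.eigenvectorUnitary : Matrix (Fin n) (Fin n) ℝ) *
      Matrix.diagonal (fun i => Real.log (hB.eigenvalues i)) *
      (star (hB.eigenvectorUnitary : Matrix (Fin n) (Fin n) ℝ))
  else 0

open scoped Classical in
/-- `B^{-1/2}`: the inverse of the unique positive semidefinite square root of a
positive semidefinite matrix `B`. -/
noncomputable def invSqrt {n : ℕ} (B : Matrix (Fin n) (Fin n) ℝ) : Matrix (Fin n) (Fin n) ℝ :=
  if hB : B.PosSemidef then
    ((hB.1.eigenvectorUnitary : Matrix (Fin n) (Fin n) ℝ) *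
      Matrix.diagonal (fun i => Real.sqrt (hB.1.eigenvalues i)) *
      (star (hB.1.eigenvectorUnitary : Matrix (Fin n) (Fin n) ℝ)))⁻¹ else 0

/-- Squared Frobenius norm of a matrix. -/
noncomputable def frobSq {m n : ℕ} (H : Matrix (Fin m) (Fin n) ℝ) : ℝ :=
  ∑ i, ∑ j, (H i j) ^ 2

/-- Singular values of a matrix (square roots of the eigenvalues of `HᴴH`). -/
noncomputable def singVals {m n : ℕ} (H : Matrix (Fin m) (Fin n) ℝ) : Fin n → ℝ :=
  fun i => Real.sqrt ((show (Hᵀ * H).IsHermitian by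
    simpa [Matrix.conjTranspose_eq_transpose_of_trivial] using
      Matrix.isHermitian_conjTranspose_mul_self H).eigenvalues i)

/-- Nuclear norm: sum of the singular values. -/
noncomputable def nuclearNorm {m n : ℕ} (H : Matrix (Fin m) (Fin n) ℝ) : ℝ :=
  ∑ i, singVals H i

/-- Spectral norm: largest singular value. -/
noncomputable def specNorm {m n : ℕ} (H : Matrix (Fin m) (Fin n) ℝ) : ℝ :=
  ⨆ i, singVals H i

/-- Eigenvalues of a symmetric matrix, sorted in decreasing order
(`eigDesc B i` is the `i`-th largest eigenvalue). -/
noncomputable def eigDesc {n : ℕ} (B : Matrix (Fin n) (Fin n) ℝ) : Fin n → ℝ :=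
  if hB : B.IsHermitian then
    fun i => (hB.eigenvalues ∘ Tuple.sort hB.eigenvalues) i.rev
  else 0

/-- Law of a standard Gaussian random vector in `ℝⁿ` (i.i.d. `gaussianReal 0 1` entries). -/
noncomputable def stdGaussian (n : ℕ) : Measure (Fin n → ℝ) :=
  Measure.pi fun _ => gaussianReal 0 1

/-- Law of a random `n × ℓ` matrix with i.i.d. standard Gaussian entries. -/
noncomputable def stdGaussianMatrix (n ℓ : ℕ) : Measure (Fin n → Fin ℓ → ℝ) :=
  Measure.pi fun _ => Measure.pi fun _ => gaussianReal 0 1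

/-- The truncated-spectral-decomposition preconditioner `P_r = A_r + I`, where
`A_r = U_r Λ_r U_rᵀ` keeps the `r` leading eigenvalues. -/
noncomputable def truncP {n : ℕ} (U : Matrix (Fin n) (Fin n) ℝ) (lam : Fin n → ℝ) (r : ℕ) :
    Matrix (Fin n) (Fin n) ℝ :=
  U * Matrix.diagonal (fun i : Fin n => if (i : ℕ) < r then lam i else 0) * Uᵀ + 1

/-- The idealized preconditioned matrix `M_r = P_r^{-1/2} (A + I) P_r^{-1/2}`. -/
noncomputable def truncM {n : ℕ} (A U : Matrix (Fin n) (Fin n) ℝ) (lam : Fin n → ℝ) (r : ℕ) :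
    Matrix (Fin n) (Fin n) ℝ :=
  invSqrt (truncP U lam r) * (A + 1) * invSqrt (truncP U lam r)

/-- The Nyström approximation `Â = AΩ(ΩᵀAΩ)⁻¹ΩᵀA`. -/
noncomputable def nystrom {n ℓ : ℕ} (A : Matrix (Fin n) (Fin n) ℝ)
    (Ω : Matrix (Fin n) (Fin ℓ) ℝ) : Matrix (Fin n) (Fin n) ℝ :=
  A * Ω * (Ωᵀ * A * Ω)⁻¹ * Ωᵀ * A

/-- The Nyström-preconditioned matrix `M̂ = P̂^{-1/2} (A + I) P̂^{-1/2}` with `P̂ = Â + I`. -/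
noncomputable def nysPrec {n ℓ : ℕ} (A : Matrix (Fin n) (Fin n) ℝ)
    (Ω : Matrix (Fin n) (Fin ℓ) ℝ) : Matrix (Fin n) (Fin n) ℝ :=
  invSqrt (nystrom A Ω + 1) * (A + 1) * invSqrt (nystrom A Ω + 1)

/-!
Write `S = P̂^{-1/2}`, so that `S P̂ S = 1`. Then `M̂ - 1 = S (A - Â) S ⪰ 0`, and with
`c = ‖A - Â‖₂` also `(1 + c) - M̂ = c · S Â S + S (c - (A - Â)) S ⪰ 0`. So every eigenvalue `μ` of
`M̂` lies in `[1, 1 + c]`, whence `(log μ)² ≤ log μ · log (1 + c)`. Summing over the spectrum gives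
`‖log M̂‖_F² ≤ tr (log M̂) · log (1 + c)`, and
`tr (log M̂) = log det M̂ = log det (A + I) - log det P̂`.
-/

namespace Matrix

variable {ι : Type*} [Fintype ι] [DecidableEq ι]

theorem IsHermitian.posSemidef_sub_smul_one_iff {H : Matrix ι ι ℝ} (hH : H.IsHermitian) (c : ℝ) :
    (H - c • 1).PosSemidef ↔ ∀ i, c ≤ hH.eigenvalues i := by
  rw [posSemidef_iff_isHermitian_and_spectrum_nonneg,
    and_iff_right (hH.sub (isHermitian_one.smul (.all c))), ← Algebra.algebraMap_eq_smul_one,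
    ← spectrum.sub_singleton_eq, hH.spectrum_real_eq_range_eigenvalues]
  simp [Set.subset_def]

theorem IsHermitian.posSemidef_smul_one_sub_iff {H : Matrix ι ι ℝ} (hH : H.IsHermitian) (c : ℝ) :
    (c • 1 - H).PosSemidef ↔ ∀ i, hH.eigenvalues i ≤ c := by
  rw [posSemidef_iff_isHermitian_and_spectrum_nonneg,
    and_iff_right ((isHermitian_one.smul (.all c)).sub hH), ← Algebra.algebraMap_eq_smul_one,
    ← spectrum.singleton_sub_eq, hH.spectrum_real_eq_range_eigenvalues]
  simp [Set.subset_def]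

theorem IsHermitian.continuousOn_spectrum {B : Matrix ι ι ℝ} (hB : B.IsHermitian) (f : ℝ → ℝ) :
    ContinuousOn f (spectrum ℝ B) :=
  (hB.spectrum_real_eq_range_eigenvalues ▸ Set.finite_range _ : (spectrum ℝ B).Finite).continuousOn f

theorem IsHermitian.trace_cfc {B : Matrix ι ι ℝ} (hB : B.IsHermitian) (f : ℝ → ℝ) :
    (cfc f B).trace = ∑ i, f (hB.eigenvalues i) := by
  rw [hB.cfc_eq, IsHermitian.cfc, Unitary.conjStarAlgAut_apply, trace_mul_cycle,
    Unitary.coe_star_mul_self, one_mul, trace_diagonal]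
  rfl

theorem transpose_cfc (f : ℝ → ℝ) (B : Matrix ι ι ℝ) : (cfc f B)ᵀ = cfc f B := by
  rw [← conjTranspose_eq_transpose_of_trivial]
  exact cfc_predicate f B

theorem PosSemidef.cfc_sqrt_mul_self {B : Matrix ι ι ℝ} (hB : B.PosSemidef) :
    cfc Real.sqrt B * cfc Real.sqrt B = B := by
  have hsqrt := hB.1.continuousOn_spectrum Real.sqrt
  calc cfc Real.sqrt B * cfc Real.sqrt B = cfc (fun x => √x * √x) B := (cfc_mul _ _ B).symm
    _ = cfc id B := cfc_congr fun x hx => by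
        rw [hB.1.spectrum_real_eq_range_eigenvalues] at hx
        obtain ⟨i, rfl⟩ := hx
        exact Real.mul_self_sqrt (hB.eigenvalues_nonneg i)
    _ = B := cfc_id ℝ B hB.1

section Congruence

variable {B P S : Matrix ι ι ℝ}

theorem conj_sub_one_eq (hSPS : S * P * S = 1) : S * B * S - 1 = S * (B - P) * S := by
  rw [← hSPS, ← sub_mul, ← mul_sub]

theorem posSemidef_conj_sub_one (hS : S.IsHermitian) (hSPS : S * P * S = 1)
    (hBP : (B - P).PosSemidef) : (S * B * S - 1).PosSemidef := by
  rw [conj_sub_one_eq hSPS]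
  simpa only [hS.eq] using hBP.conjTranspose_mul_mul_same S

theorem posSemidef_smul_one_sub_conj (hS : S.IsHermitian) (hSPS : S * P * S = 1)
    (hP : (P - 1).PosSemidef) {c : ℝ} (hc : 0 ≤ c) (hBP : (c • 1 - (B - P)).PosSemidef) :
    ((1 + c) • 1 - S * B * S).PosSemidef := by
  have hSS : S * (P - 1) * S = 1 - S * S := by rw [mul_sub, sub_mul, mul_one, hSPS]
  have hsplit : (1 + c) • 1 - S * B * S = c • (S * (P - 1) * S) + S * (c • 1 - (B - P)) * S := by
    rw [← sub_add_cancel (S * B * S) 1, conj_sub_one_eq hSPS, hSS]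
    simp only [mul_sub, sub_mul, Matrix.mul_smul, Matrix.smul_mul, mul_one, smul_sub, add_smul,
      one_smul]
    abel
  rw [hsplit]
  refine .add (.smul ?_ hc) ?_
  · simpa only [hS.eq] using hP.conjTranspose_mul_mul_same S
  · simpa only [hS.eq] using hBP.conjTranspose_mul_mul_same S

theorem det_conj_mul_det (hSPS : S * P * S = 1) : (S * B * S).det * P.det = B.det := by
  have hdet : S.det * P.det * S.det = 1 := by simpa [det_mul] using congrArg det hSPS
  rw [det_mul, det_mul]
  linear_combination B.det * hdet

end Congruence

end Matrix

open Matrix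

theorem frobSq_eq_trace_transpose_mul {m n : ℕ} (H : Matrix (Fin m) (Fin n) ℝ) :
    frobSq H = (Hᵀ * H).trace := by
  simp only [frobSq, trace, diag, mul_apply, transpose_apply, sq]
  exact Finset.sum_comm

theorem specNorm_nonneg {m n : ℕ} (E : Matrix (Fin m) (Fin n) ℝ) : 0 ≤ specNorm E :=
  Real.iSup_nonneg fun _ => Real.sqrt_nonneg _

theorem posSemidef_specNorm_sq_smul_one_sub {m n : ℕ} (E : Matrix (Fin m) (Fin n) ℝ) :
    (specNorm E ^ 2 • 1 - Eᵀ * E).PosSemidef := by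
  have hE : (Eᵀ * E).IsHermitian := by
    simpa [conjTranspose_eq_transpose_of_trivial] using isHermitian_conjTranspose_mul_self E
  refine (hE.posSemidef_smul_one_sub_iff _).2 fun i => ?_
  calc hE.eigenvalues i = singVals E i ^ 2 :=
        (Real.sq_sqrt (eigenvalues_conjTranspose_mul_self_nonneg E i)).symm
    _ ≤ specNorm E ^ 2 :=
        pow_le_pow_left₀ (Real.sqrt_nonneg _)
          (show singVals E i ≤ specNorm E from le_ciSup (Set.finite_range _).bddAbove i) 2

theorem dotProduct_mulVec_le_specNorm_mul {n : ℕ} (E : Matrix (Fin n) (Fin n) ℝ)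
    (x : Fin n → ℝ) : x ⬝ᵥ (E *ᵥ x) ≤ specNorm E * (x ⬝ᵥ x) := by
  have hx : 0 ≤ x ⬝ᵥ x := by simpa using dotProduct_star_self_nonneg x
  have hEx : (E *ᵥ x) ⬝ᵥ (E *ᵥ x) ≤ specNorm E ^ 2 * (x ⬝ᵥ x) := by
    have := (posSemidef_specNorm_sq_smul_one_sub E).dotProduct_mulVec_nonneg x
    simp only [star_trivial, sub_mulVec, smul_mulVec, one_mulVec, dotProduct_sub,
      dotProduct_smul, smul_eq_mul, ← mulVec_mulVec, sub_nonneg] at this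
    rwa [dotProduct_mulVec, vecMul_transpose] at this
  have hcs : (x ⬝ᵥ (E *ᵥ x)) ^ 2 ≤ (x ⬝ᵥ x) * ((E *ᵥ x) ⬝ᵥ (E *ᵥ x)) := by
    simpa [dotProduct, sq] using Finset.sum_mul_sq_le_sq_mul_sq Finset.univ x (E *ᵥ x)
  refine (le_abs_self _).trans (abs_le_of_sq_le_sq ?_ (by have := specNorm_nonneg E; positivity))
  calc (x ⬝ᵥ (E *ᵥ x)) ^ 2 ≤ (x ⬝ᵥ x) * ((E *ᵥ x) ⬝ᵥ (E *ᵥ x)) := hcs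
    _ ≤ (x ⬝ᵥ x) * (specNorm E ^ 2 * (x ⬝ᵥ x)) := mul_le_mul_of_nonneg_left hEx hx
    _ = (specNorm E * (x ⬝ᵥ x)) ^ 2 := by ring

theorem posSemidef_specNorm_smul_one_sub {n : ℕ} {E : Matrix (Fin n) (Fin n) ℝ}
    (hE : E.IsHermitian) : (specNorm E • 1 - E).PosSemidef := by
  refine .of_dotProduct_mulVec_nonneg ((isHermitian_one.smul (.all _)).sub hE) fun x => ?_
  simpa [sub_mulVec, smul_mulVec, dotProduct_sub] using dotProduct_mulVec_le_specNorm_mul E x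

section SpectralFunctions

variable {n : ℕ} {B : Matrix (Fin n) (Fin n) ℝ}

theorem matLog_eq_cfc (hB : B.IsHermitian) : matLog B = cfc Real.log B := by
  rw [matLog, dif_pos hB, hB.cfc_eq, IsHermitian.cfc, Unitary.conjStarAlgAut_apply]
  rfl

theorem invSqrt_eq_inv_cfc_sqrt (hB : B.PosSemidef) : invSqrt B = (cfc Real.sqrt B)⁻¹ := by
  rw [invSqrt, dif_pos hB, hB.1.cfc_eq, IsHermitian.cfc, Unitary.conjStarAlgAut_apply]
  rfl

theorem isHermitian_invSqrt (hB : B.PosSemidef) : (invSqrt B).IsHermitian := by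
  rw [invSqrt_eq_inv_cfc_sqrt hB]
  exact IsHermitian.inv (cfc_predicate _ _)

theorem invSqrt_mul_self_mul_invSqrt (hB : B.PosDef) : invSqrt B * B * invSqrt B = 1 := by
  have hRR := hB.posSemidef.cfc_sqrt_mul_self
  rw [invSqrt_eq_inv_cfc_sqrt hB.posSemidef]
  set R := cfc Real.sqrt B
  have hR : IsUnit R.det := by
    refine isUnit_iff_ne_zero.2 fun h => hB.det_pos.ne' ?_
    rw [← hRR, det_mul, h, zero_mul]
  calc R⁻¹ * B * R⁻¹ = R⁻¹ * R * (R * R⁻¹) := by rw [← hRR]; simp only [mul_assoc]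
    _ = 1 := by rw [nonsing_inv_mul _ hR, mul_nonsing_inv _ hR, one_mul]

theorem frobSq_matLog (hB : B.IsHermitian) :
    frobSq (matLog B) = ∑ i, Real.log (hB.eigenvalues i) ^ 2 := by
  have hlog := hB.continuousOn_spectrum Real.log
  rw [frobSq_eq_trace_transpose_mul, matLog_eq_cfc hB, transpose_cfc, ← cfc_mul ..,
    hB.trace_cfc]
  simp [sq]

theorem trace_matLog (hB : B.IsHermitian) (hdet : B.det ≠ 0) :
    (matLog B).trace = Real.log B.det := by
  have hprod : ∏ i, hB.eigenvalues i ≠ 0 := by simpa [hB.det_eq_prod_eigenvalues] using hdet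
  rw [matLog_eq_cfc hB, hB.trace_cfc, hB.det_eq_prod_eigenvalues,
    ← Real.log_prod fun i _ => Finset.prod_ne_zero_iff.mp hprod i (Finset.mem_univ i)]
  simp

theorem sq_log_le_log_mul_log {x c : ℝ} (h1 : 1 ≤ x) (hc : x ≤ c) :
    Real.log x ^ 2 ≤ Real.log x * Real.log c :=
  (sq (Real.log x)).trans_le <|
    mul_le_mul_of_nonneg_left (Real.log_le_log (by linarith) hc) (Real.log_nonneg h1)

theorem frobSq_matLog_le (hB : B.IsHermitian) {c : ℝ} (h1 : ∀ i, 1 ≤ hB.eigenvalues i)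
    (hc : ∀ i, hB.eigenvalues i ≤ c) : frobSq (matLog B) ≤ (matLog B).trace * Real.log c := by
  rw [frobSq_matLog hB, matLog_eq_cfc hB, hB.trace_cfc, Finset.sum_mul]
  exact Finset.sum_le_sum fun i _ => sq_log_le_log_mul_log (h1 i) (hc i)

theorem trace_matLog_conj {P S : Matrix (Fin n) (Fin n) ℝ} (hSPS : S * P * S = 1)
    (hB : B.PosDef) (hP : P.PosDef) (hM : (S * B * S).IsHermitian) :
    (matLog (S * B * S)).trace = (matLog B).trace - (matLog P).trace := by
  have hdet := det_conj_mul_det (B := B) hSPS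
  have hM0 : (S * B * S).det ≠ 0 := left_ne_zero_of_mul (hdet ▸ hB.det_pos.ne')
  rw [trace_matLog hM hM0, trace_matLog hB.1 hB.det_pos.ne', trace_matLog hP.1 hP.det_pos.ne',
    ← hdet, Real.log_mul hM0 hP.det_pos.ne']
  ring

end SpectralFunctions

theorem stmt13_general {n : ℕ} (A Ahat : Matrix (Fin n) (Fin n) ℝ)
    (hpsd : Ahat.PosSemidef) (hle : (A - Ahat).PosSemidef) :
    frobSq (matLog (invSqrt (Ahat + 1) * (A + 1) * invSqrt (Ahat + 1)))
      ≤ ((matLog (A + 1)).trace - (matLog (Ahat + 1)).trace)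
          * Real.log (1 + specNorm (A - Ahat)) := by
  have hdiff : A + 1 - (Ahat + 1) = A - Ahat := add_sub_add_right_eq_sub A Ahat 1
  have hP : (Ahat + 1).PosDef := PosDef.posSemidef_add hpsd .one
  have hB : (A + 1).PosDef := by
    convert PosDef.posSemidef_add hle hP using 1
    abel
  have hS := isHermitian_invSqrt hP.posSemidef
  have hSPS := invSqrt_mul_self_mul_invSqrt hP
  have hM : (invSqrt (Ahat + 1) * (A + 1) * invSqrt (Ahat + 1)).IsHermitian := by
    have := isHermitian_conjTranspose_mul_mul (invSqrt (Ahat + 1)) hB.1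
    rwa [hS.eq] at this
  have hlow := (hM.posSemidef_sub_smul_one_iff 1).1 <| by
    rw [one_smul]
    exact posSemidef_conj_sub_one hS hSPS (hdiff ▸ hle)
  have hup : ∀ i, hM.eigenvalues i ≤ 1 + specNorm (A - Ahat) :=
    (hM.posSemidef_smul_one_sub_iff _).1 <|
      posSemidef_smul_one_sub_conj hS hSPS (by simpa using hpsd) (specNorm_nonneg _) <| by
        rw [hdiff]
        exact posSemidef_specNorm_smul_one_sub hle.1
  rw [← trace_matLog_conj hSPS hB hP hM]
  exact frobSq_matLog_le hM hlow hup

theorem stmt13 {n : ℕ} (A Ahat : Matrix (Fin n) (Fin n) ℝ) (hAs : A.IsSymm) (hAhs : Ahat.IsSymm)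
    (hpsd : Ahat.PosSemidef) (hle : (A - Ahat).PosSemidef) :
    frobSq (matLog (invSqrt (Ahat + 1) * (A + 1) * invSqrt (Ahat + 1)))
      ≤ ((matLog (A + 1)).trace - (matLog (Ahat + 1)).trace)
          * Real.log (1 + specNorm (A - Ahat)) :=
  stmt13_general A Ahat hpsd hle
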